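/- Let T be a simplex of the mesh with diameter h_T, let I_h denote the Lagrange nodal interpolation onto P¹(T), and let σ_h, v_h be piecewise-linear functions (σ_h, v_h ∈ P¹(T) on T). Then for any 1 ≤ p ≤ ∞ and q with 1/p + 1/q = 1: ∫_T (σ_h v_h − I_h(σ_h v_h)) dx ≤ h_T² ‖∇σ_h‖_{L^p(T)} ‖∇v_h‖_{L^q(T)}. -/

import Mathlib

/-!
At a point `x = ∑ wᵢ vᵢ` of the simplex, written in barycentric coordinates, the affine functions
`σ_h`, `v_h` and the interpolant take the values `∑ wᵢ aᵢ`, `∑ wᵢ bᵢ` and `∑ wᵢ aᵢ bᵢ`, where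
`aᵢ, bᵢ` are the vertex values. The interpolation error is therefore a weighted covariance,
`-½ ∑ᵢⱼ wᵢ wⱼ (aᵢ - aⱼ)(bᵢ - bⱼ)`, and `|aᵢ - aⱼ| ≤ |∇σ_h| h_T`, `|bᵢ - bⱼ| ≤ |∇v_h| h_T`
bound it by `½ h_T² |∇σ_h| |∇v_h|`. The gradients are constant, so integrating over `T` gives
`½ h_T² |∇σ_h| |∇v_h| |T|`, while Hölder's exponents make
`‖∇σ_h‖_{L^p(T)} ‖∇v_h‖_{L^q(T)} = |∇σ_h| |∇v_h| |T|^{1/p + 1/q}` equal to `|∇σ_h| |∇v_h| |T|`.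
-/

open MeasureTheory
open scoped ENNReal

noncomputable section

/-- Euclidean space `ℝ^d`. -/
abbrev Euc (d : ℕ) := EuclideanSpace ℝ (Fin d)

/-- The `L^p(D)` norm. -/
def lpOn {d : ℕ} (p : ℝ≥0∞) (D : Set (Euc d)) (f : Euc d → ℝ) : ℝ :=
  (eLpNorm f p ((volume : Measure (Euc d)).restrict D)).toReal

/-- `f` is a (globally defined) affine function, i.e. a polynomial of degree ≤ 1. -/
def AffineFn {d : ℕ} (f : Euc d → ℝ) : Prop :=
  ∃ (L : Euc d →L[ℝ] ℝ) (c : ℝ), ∀ x, f x = L x + c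

section WeightedCovariance

variable {ι : Type*} [Fintype ι] (w a b : ι → ℝ)

theorem sum_sum_mul_mul_sub_mul_sub (hw : ∑ i, w i = 1) :
    ∑ i, ∑ j, w i * w j * ((a i - a j) * (b i - b j)) =
      2 * (∑ i, w i * (a i * b i) - (∑ i, w i * a i) * ∑ i, w i * b i) := by
  have expand : ∀ i j, w i * w j * ((a i - a j) * (b i - b j)) =
      w i * (a i * b i) * w j + w i * (w j * (a j * b j))
        - (w i * a i * (w j * b j) + w i * b i * (w j * a j)) := by
    intros; ring
  simp only [expand, Finset.sum_add_distrib, Finset.sum_sub_distrib, ← Finset.sum_mul,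
    ← Finset.mul_sum, hw]
  ring

theorem abs_sum_mul_sum_sub_sum_mul_le (hw₀ : ∀ i, 0 ≤ w i) (hw : ∑ i, w i = 1) {A B : ℝ}
    (hA : ∀ i j, |a i - a j| ≤ A) (hB : ∀ i j, |b i - b j| ≤ B) :
    |(∑ i, w i * a i) * (∑ i, w i * b i) - ∑ i, w i * (a i * b i)| ≤ A * B / 2 := by
  have hterm : ∀ i j, |w i * w j * ((a i - a j) * (b i - b j))| ≤ w i * w j * (A * B) := by
    intro i j
    rw [abs_mul, abs_of_nonneg (mul_nonneg (hw₀ i) (hw₀ j)), abs_mul]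
    exact mul_le_mul_of_nonneg_left
      (mul_le_mul (hA i j) (hB i j) (abs_nonneg _) ((abs_nonneg _).trans (hA i j)))
      (mul_nonneg (hw₀ i) (hw₀ j))
  calc |(∑ i, w i * a i) * (∑ i, w i * b i) - ∑ i, w i * (a i * b i)|
      = |∑ i, ∑ j, w i * w j * ((a i - a j) * (b i - b j))| / 2 := by
        rw [sum_sum_mul_mul_sub_mul_sub w a b hw, abs_mul, abs_two, abs_sub_comm]
        ring
    _ ≤ (∑ i, ∑ j, w i * w j * (A * B)) / 2 := by
        gcongr
        exact (Finset.abs_sum_le_sum_abs _ _).trans <| Finset.sum_le_sum fun i _ =>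
          (Finset.abs_sum_le_sum_abs _ _).trans <| Finset.sum_le_sum fun j _ => hterm i j
    _ = A * B / 2 := by
        simp only [← Finset.sum_mul, ← Finset.mul_sum, hw, one_mul]

end WeightedCovariance

namespace AffineFn

variable {d : ℕ} {f : Euc d → ℝ}

theorem apply_sum_smul (hf : AffineFn f) {ι : Type*} [Fintype ι] {w : ι → ℝ}
    (hw : ∑ i, w i = 1) (z : ι → Euc d) : f (∑ i, w i • z i) = ∑ i, w i * f (z i) := by
  obtain ⟨L, c, hL⟩ := hf
  simp only [hL, map_sum, map_smul, smul_eq_mul, mul_add, Finset.sum_add_distrib,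
    ← Finset.sum_mul, hw, one_mul]

theorem norm_gradient_of_eq {L : Euc d →L[ℝ] ℝ} {c : ℝ} (hf : ∀ x, f x = L x + c) (x : Euc d) :
    ‖gradient f x‖ = ‖L‖ := by
  have hfderiv : fderiv ℝ f x = L := by
    rw [show f = fun y => L y + c from funext hf]
    exact (L.hasFDerivAt.add_const c).fderiv
  rw [gradient, hfderiv, LinearIsometryEquiv.norm_map]

theorem norm_gradient_eq (hf : AffineFn f) (x y : Euc d) : ‖gradient f x‖ = ‖gradient f y‖ := by
  obtain ⟨L, c, hL⟩ := hf
  rw [norm_gradient_of_eq hL, norm_gradient_of_eq hL]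

theorem abs_sub_le (hf : AffineFn f) (x y z : Euc d) : |f y - f z| ≤ ‖gradient f x‖ * dist y z := by
  obtain ⟨L, c, hL⟩ := hf
  rw [norm_gradient_of_eq hL, hL, hL, add_sub_add_right_eq_sub, ← map_sub, ← Real.norm_eq_abs,
    dist_eq_norm]
  exact L.le_opNorm _

theorem abs_mul_sub_interpolant_le {g q : Euc d → ℝ} (hf : AffineFn f) (hg : AffineFn g)
    (hq : AffineFn q) {s : Set (Euc d)} (hqs : ∀ y ∈ s, q y = f y * g y) {A B : ℝ}
    (hA : ∀ y ∈ s, ∀ z ∈ s, |f y - f z| ≤ A) (hB : ∀ y ∈ s, ∀ z ∈ s, |g y - g z| ≤ B)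
    {x : Euc d} (hx : x ∈ convexHull ℝ s) : |f x * g x - q x| ≤ A * B / 2 := by
  obtain ⟨ι, _, w, z, hw₀, hw, hzs, rfl⟩ := mem_convexHull_iff_exists_fintype.1 hx
  rw [hf.apply_sum_smul hw, hg.apply_sum_smul hw, hq.apply_sum_smul hw]
  simp only [hqs _ (hzs _)]
  exact abs_sum_mul_sum_sub_sum_mul_le w _ _ hw₀ hw (fun i j => hA _ (hzs i) _ (hzs j))
    (fun i j => hB _ (hzs i) _ (hzs j))

end AffineFn

theorem Convex.diam_interior {E : Type*} [NormedAddCommGroup E] [NormedSpace ℝ E] {K : Set E}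
    (hK : Convex ℝ K) (hint : (interior K).Nonempty) : Metric.diam (interior K) = Metric.diam K := by
  rw [← Metric.diam_closure, hK.closure_interior_eq_closure_of_nonempty_interior hint,
    Metric.diam_closure]

theorem ENNReal.inv_toReal_add_inv_toReal {p p' : ℝ≥0∞} (hpq : p⁻¹ + p'⁻¹ = 1) :
    p.toReal⁻¹ + p'.toReal⁻¹ = 1 := by
  have hp : p⁻¹ ≠ ⊤ := ne_top_of_le_ne_top ENNReal.one_ne_top (hpq ▸ le_self_add)
  have hp' : p'⁻¹ ≠ ⊤ := ne_top_of_le_ne_top ENNReal.one_ne_top (hpq ▸ le_add_self)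
  rw [← ENNReal.toReal_inv, ← ENNReal.toReal_inv, ← ENNReal.toReal_add hp hp', hpq,
    ENNReal.toReal_one]

section LpOnConst

variable {d : ℕ} {D : Set (Euc d)}

theorem lpOn_const {p : ℝ≥0∞} (hp : p ≠ 0) (hD : volume D ≠ 0) (a : ℝ) :
    lpOn p D (fun _ => a) = |a| * volume.real D ^ p.toReal⁻¹ := by
  rw [lpOn, eLpNorm_const _ hp (by simpa using hD), Measure.restrict_apply_univ,
    ENNReal.toReal_mul, ← ENNReal.toReal_rpow, one_div, toReal_enorm, Real.norm_eq_abs,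
    measureReal_def]

theorem lpOn_const_mul_lpOn_const {p p' : ℝ≥0∞} (hpq : p⁻¹ + p'⁻¹ = 1) (hD : volume D ≠ 0)
    (a b : ℝ) : lpOn p D (fun _ => a) * lpOn p' D (fun _ => b) = |a| * |b| * volume.real D := by
  have hp : p ≠ 0 := by rintro rfl; simp at hpq
  have hp' : p' ≠ 0 := by rintro rfl; simp at hpq
  have hexp := ENNReal.inv_toReal_add_inv_toReal hpq
  rw [lpOn_const hp hD, lpOn_const hp' hD, mul_mul_mul_comm,
    ← Real.rpow_add' measureReal_nonneg (by rw [hexp]; exact one_ne_zero), hexp, Real.rpow_one]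

end LpOnConst

theorem lumped_product_interpolation_general (d : ℕ)
    (v : Fin (d + 1) → Euc d)
    (T : Set (Euc d)) (hT : T = interior (convexHull ℝ (Set.range v)))
    (σh vh q : Euc d → ℝ) (hσ : AffineFn σh) (hvh : AffineFn vh)
    (hq : AffineFn q) (hqi : ∀ i, q (v i) = σh (v i) * vh (v i))
    (p p' : ℝ≥0∞) (hpq : p⁻¹ + p'⁻¹ = 1) :
    (∫ x in T, (σh x * vh x - q x)) ≤
      Metric.diam T ^ 2 *
        (lpOn p T (fun x => ‖gradient σh x‖) * lpOn p' T (fun x => ‖gradient vh x‖)) := by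
  rcases T.eq_empty_or_nonempty with rfl | ⟨x₀, hx₀⟩
  · simp
  have hTK : T ⊆ convexHull ℝ (Set.range v) := hT ▸ interior_subset
  have hdiam : Metric.diam T = Metric.diam (Set.range v) := by
    have hint : (interior (convexHull ℝ (Set.range v))).Nonempty := hT ▸ ⟨x₀, hx₀⟩
    rw [hT, (convex_convexHull ℝ _).diam_interior hint, convexHull_diam]
  have hvol₀ : volume T ≠ 0 := (hT ▸ isOpen_interior : IsOpen T).measure_ne_zero _ ⟨x₀, hx₀⟩
  have hK : IsCompact (convexHull ℝ (Set.range v)) := (Set.finite_range v).isCompact_convexHull ℝ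
  have hvol : volume T < ⊤ := (hK.isBounded.subset hTK).measure_lt_top
  have hvar : ∀ {f : Euc d → ℝ}, AffineFn f → ∀ y ∈ Set.range v, ∀ z ∈ Set.range v,
      |f y - f z| ≤ ‖gradient f x₀‖ * Metric.diam T := fun hf y hy z hz =>
    (hf.abs_sub_le x₀ y z).trans <| by
      rw [hdiam]; gcongr; exact Metric.dist_le_diam_of_mem (Set.finite_range v).isBounded hy hz
  have hpointwise : ∀ x ∈ T, ‖σh x * vh x - q x‖ ≤
      ‖gradient σh x₀‖ * Metric.diam T * (‖gradient vh x₀‖ * Metric.diam T) / 2 :=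
    fun x hx => hσ.abs_mul_sub_interpolant_le hvh hq (by rintro _ ⟨i, rfl⟩; exact hqi i)
      (hvar hσ) (hvar hvh) (hTK hx)
  rw [funext fun x => hσ.norm_gradient_eq x x₀, funext fun x => hvh.norm_gradient_eq x x₀,
    lpOn_const_mul_lpOn_const hpq hvol₀, abs_norm, abs_norm]
  have hrhs : 0 ≤ Metric.diam T ^ 2 * (‖gradient σh x₀‖ * ‖gradient vh x₀‖ * volume.real T) := by
    positivity
  calc (∫ x in T, (σh x * vh x - q x)) ≤ ‖∫ x in T, (σh x * vh x - q x)‖ := Real.le_norm_self _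
    _ ≤ ‖gradient σh x₀‖ * Metric.diam T * (‖gradient vh x₀‖ * Metric.diam T) / 2
          * volume.real T := norm_setIntegral_le_of_norm_le_const hvol hpointwise
    _ ≤ _ := by linarith

/-- **Lemma 3.1 (lumped-mass / nodal interpolation error for a product).**
Let `T` be a nondegenerate open simplex with vertices `v` and diameter `h_T`, let
`σ_h, v_h ∈ P¹(T)` and let `I_h(σ_h v_h) ∈ P¹(T)` be the Lagrange nodal interpolant of the
product (the affine function `q` agreeing with `σ_h v_h` at the vertices).  Then, for any
`1 ≤ p ≤ ∞` and `q` with `1/p + 1/q = 1`,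
`∫_T (σ_h v_h - I_h(σ_h v_h)) dx ≤ h_T² ‖∇σ_h‖_{L^p(T)} ‖∇v_h‖_{L^q(T)}`. -/
theorem lumped_product_interpolation (d : ℕ)
    (v : Fin (d + 1) → Euc d) (hv : AffineIndependent ℝ v)
    (T : Set (Euc d)) (hT : T = interior (convexHull ℝ (Set.range v)))
    (σh vh q : Euc d → ℝ) (hσ : AffineFn σh) (hvh : AffineFn vh)
    (hq : AffineFn q) (hqi : ∀ i, q (v i) = σh (v i) * vh (v i))
    (p p' : ℝ≥0∞) (hp : 1 ≤ p) (hpq : p⁻¹ + p'⁻¹ = 1) :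
    (∫ x in T, (σh x * vh x - q x)) ≤
      Metric.diam T ^ 2 *
        (lpOn p T (fun x => ‖gradient σh x‖) * lpOn p' T (fun x => ‖gradient vh x‖)) :=
  lumped_product_interpolation_general d v T hT σh vh q hσ hvh hq hqi p p' hpq
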